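/- Let B ∈ ℝ^{m×m} be symmetric positive definite, let s ∈ ℝ^m with s ≠ 0, and let y ∈ ℝ^m. Define θ = 1 if y^⊤s ≥ 0.2·s^⊤Bs, and θ = 0.8·s^⊤Bs / (s^⊤Bs − y^⊤s) otherwise; set r = θ·y + (1 − θ)·Bs. Then the damped BFGS update B' = B − (Bs)(Bs)^⊤ / (s^⊤Bs) + r r^⊤ / (s^⊤s) is symmetric positive definite; i.e., the update rule of the algorithm preserves symmetric positive definiteness of the quasi-Newton matrices. -/

import Mathlib

/-!
Put `a = sᵀBs > 0`. The quadratic form of `B - (Bs)(Bs)ᵀ / a` at `x` equals `zᵀBz`, where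
`z = x - (xᵀBs / a) s` is the `B`-orthogonal projection of `x` away from `s`; hence this matrix is
positive semidefinite and its form vanishes only on multiples of `s`. Powell's choice of `θ`
forces `rᵀs ≥ a / 5 > 0`, so the added term `(rᵀx)² / sᵀs` is positive on those multiples.
-/

open Matrix

theorem dotProduct_vecMulVec_mulVec {n α : Type*} [Fintype n] [CommSemiring α]
    (u v x : n → α) : x ⬝ᵥ vecMulVec u v *ᵥ x = (x ⬝ᵥ u) * (v ⬝ᵥ x) := by
  rw [dotProduct_mulVec, vecMul_vecMulVec, smul_dotProduct, smul_eq_mul]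

namespace Matrix

variable {n : Type*} [Fintype n] {B : Matrix n n ℝ}

theorem posSemidef_vecMulVec_self (u : n → ℝ) : (vecMulVec u u).PosSemidef := by
  simpa using posSemidef_vecMulVec_self_star u

theorem IsSymm.dotProduct_mulVec_comm (hB : B.IsSymm) (x y : n → ℝ) :
    x ⬝ᵥ B *ᵥ y = y ⬝ᵥ B *ᵥ x := by
  rw [dotProduct_mulVec, ← mulVec_transpose, hB.eq, dotProduct_comm]

theorem IsSymm.dotProduct_sub_smul_vecMulVec_mulVec (hB : B.IsSymm) {s : n → ℝ}
    (hs : s ⬝ᵥ B *ᵥ s ≠ 0) (x : n → ℝ) :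
    x ⬝ᵥ (B - (s ⬝ᵥ B *ᵥ s)⁻¹ • vecMulVec (B *ᵥ s) (B *ᵥ s)) *ᵥ x =
      (x - ((x ⬝ᵥ B *ᵥ s) / (s ⬝ᵥ B *ᵥ s)) • s) ⬝ᵥ
        B *ᵥ (x - ((x ⬝ᵥ B *ᵥ s) / (s ⬝ᵥ B *ᵥ s)) • s) := by
  have hsx : s ⬝ᵥ B *ᵥ x = x ⬝ᵥ B *ᵥ s := hB.dotProduct_mulVec_comm s x
  simp only [sub_mulVec, smul_mulVec, dotProduct_sub, dotProduct_smul,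
    dotProduct_vecMulVec_mulVec, mulVec_sub, mulVec_smul, sub_dotProduct, smul_dotProduct,
    smul_eq_mul, hsx, dotProduct_comm _ x]
  field_simp
  ring

theorem PosDef.dotProduct_mulVec_self_pos (hB : B.PosDef) {s : n → ℝ} (hs : s ≠ 0) :
    0 < s ⬝ᵥ B *ᵥ s := by
  simpa using hB.dotProduct_mulVec_pos hs

theorem PosDef.posSemidef_sub_smul_vecMulVec (hB : B.PosDef) (s : n → ℝ) :
    (B - (s ⬝ᵥ B *ᵥ s)⁻¹ • vecMulVec (B *ᵥ s) (B *ᵥ s)).PosSemidef := by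
  rcases eq_or_ne s 0 with rfl | hs
  · simpa using hB.posSemidef
  have hsymm : B.IsSymm := by simpa using hB.isHermitian
  refine PosSemidef.of_dotProduct_mulVec_nonneg (hB.isHermitian.sub
    ((posSemidef_vecMulVec_self _).isHermitian.smul (IsSelfAdjoint.all _))) fun x => ?_
  rw [star_trivial, hsymm.dotProduct_sub_smul_vecMulVec_mulVec
    (hB.dotProduct_mulVec_self_pos hs).ne']
  exact hB.posSemidef.dotProduct_mulVec_nonneg _

theorem PosDef.sub_smul_vecMulVec_add_smul_vecMulVec (hB : B.PosDef) {s r : n → ℝ}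
    (hs : s ≠ 0) (hrs : r ⬝ᵥ s ≠ 0) {c : ℝ} (hc : 0 < c) :
    (B - (s ⬝ᵥ B *ᵥ s)⁻¹ • vecMulVec (B *ᵥ s) (B *ᵥ s) + c • vecMulVec r r).PosDef := by
  have hsBs := hB.dotProduct_mulVec_self_pos hs
  have hsymm : B.IsSymm := by simpa using hB.isHermitian
  have hP := hB.posSemidef_sub_smul_vecMulVec s
  refine PosDef.of_dotProduct_mulVec_pos
    (hP.add ((posSemidef_vecMulVec_self r).smul hc.le)).isHermitian fun x hx => ?_
  rw [star_trivial, add_mulVec, dotProduct_add, smul_mulVec, dotProduct_smul,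
    dotProduct_vecMulVec_mulVec, smul_eq_mul, dotProduct_comm x r, ← sq]
  have hq := hsymm.dotProduct_sub_smul_vecMulVec_mulVec hsBs.ne' x
  set z := x - ((x ⬝ᵥ B *ᵥ s) / (s ⬝ᵥ B *ᵥ s)) • s
  rcases eq_or_ne z 0 with hz | hz
  · obtain ⟨t, rfl⟩ : ∃ t : ℝ, x = t • s := ⟨_, sub_eq_zero.mp hz⟩
    have ht : t ≠ 0 := by rintro rfl; simp at hx
    have hr : 0 < c * (r ⬝ᵥ t • s) ^ 2 := by
      rw [dotProduct_smul, smul_eq_mul]; positivity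
    have hq_nonneg := hP.dotProduct_mulVec_nonneg (t • s)
    rw [star_trivial] at hq_nonneg
    exact add_pos_of_nonneg_of_pos hq_nonneg hr
  · rw [hq]
    exact add_pos_of_pos_of_nonneg (hB.dotProduct_mulVec_self_pos hz) (by positivity)

end Matrix

/-- With `a = sᵀBs` and `b = yᵀs`, `θ b + (1 - θ) a` is the curvature `rᵀs` of the damped vector
`r = θ y + (1 - θ) B s`. -/
theorem le_damped_curvature {a b θ : ℝ} (ha : 0 ≤ a)
    (hθ : θ = if b ≥ 0.2 * a then 1 else 0.8 * a / (a - b)) :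
    0.2 * a ≤ θ * b + (1 - θ) * a := by
  split_ifs at hθ with hb
  · subst hθ; linarith
  · have hab : 0 < a - b := by linarith
    have : θ * (a - b) = 0.8 * a := by rw [hθ]; field_simp
    linarith

theorem damped_bfgs_preserves_posDef (m : ℕ) (B : Matrix (Fin m) (Fin m) ℝ)
    (hB : B.PosDef) (s : Fin m → ℝ) (hs : s ≠ 0) (y : Fin m → ℝ)
    (θ : ℝ)
    (hθ : θ = if y ⬝ᵥ s ≥ 0.2 * (s ⬝ᵥ B.mulVec s) then 1
      else 0.8 * (s ⬝ᵥ B.mulVec s) / (s ⬝ᵥ B.mulVec s - y ⬝ᵥ s))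
    (r : Fin m → ℝ) (hr : r = θ • y + (1 - θ) • B.mulVec s) :
    (B - (s ⬝ᵥ B.mulVec s)⁻¹ • vecMulVec (B.mulVec s) (B.mulVec s)
      + (s ⬝ᵥ s)⁻¹ • vecMulVec r r).PosDef := by
  have hsBs := hB.dotProduct_mulVec_self_pos hs
  have hrs : 0.2 * (s ⬝ᵥ B *ᵥ s) ≤ r ⬝ᵥ s := by
    rw [hr, add_dotProduct, smul_dotProduct, smul_dotProduct, smul_eq_mul, smul_eq_mul,
      dotProduct_comm (B *ᵥ s)]
    exact le_damped_curvature hsBs.le hθ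
  have hss : 0 < s ⬝ᵥ s := by simpa using dotProduct_star_self_pos_iff.mpr hs
  exact hB.sub_smul_vecMulVec_add_smul_vecMulVec hs (by linarith : 0 < r ⬝ᵥ s).ne'
    (inv_pos.mpr hss)
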